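/- Let X be a finite set with at least two elements, let 0 < m ≤ 1/|X|, let W be a measurable subset of ℝ^d, and let w ↦ p_w be a map from W into the restricted simplex Δ̊_m(X) such that the relevant sublevel sets are Lebesgue measurable. Then there exists a constant C > 0 (depending only on m) such that for every ε > 0 and every pair q, p* ∈ Δ̊_m(X) with D(q‖p*) ≤ ε, the Lebesgue measures satisfy Vol({w ∈ W : D(q‖p_w) ≤ ε}) ≤ Vol({w ∈ W : D(p_w‖p*) ≤ C·ε}) ≤ Vol({w ∈ W : D(q‖p_w) ≤ (C/2)·(C + 1)·ε}). -/

import Mathlib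

/-! On the simplex, `s ↦ s log (s / p) - (s - p)` lies between `(s - p)^2 / 2` (it vanishes to
second order at `p` and `s ↦ s log s` has second derivative `1 / s ≥ 1` on `(0, 1]`) and
`(s - p)^2 / p` (from `log t ≤ t - 1`), while the linear terms `s - p` sum to zero over `X`. Hence on
`Δ̊_m(X)` the divergence `D(q‖p)` is squeezed between `‖q - p‖² / 2` and `‖q - p‖² / m`. As
`‖a - c‖² ≤ 2 (‖a - b‖² + ‖b - c‖²)`, each sublevel set in the statement lies inside the next one,
with `C = 8 / m`. -/

open Finset MeasureTheory

/-- A probability distribution on a finite type: nonnegative and sums to 1. -/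
def IsProb {X : Type*} [Fintype X] (p : X → ℝ) : Prop :=
  (∀ x, 0 ≤ p x) ∧ ∑ x, p x = 1

/-- Kullback–Leibler divergence between distributions on a finite type. -/
noncomputable def klDiv {X : Type*} [Fintype X] (q p : X → ℝ) : ℝ :=
  ∑ x, q x * Real.log (q x / p x)

open Real

lemma mul_log_div_le_sub_add_sq_div {p q : ℝ} (hp : 0 < p) (hq : 0 ≤ q) :
    q * log (q / p) ≤ q - p + (q - p) ^ 2 / p := by
  have h : q * log (q / p) ≤ q * (q / p - 1) := by
    rcases hq.eq_or_lt with rfl | hq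
    · simp
    · exact mul_le_mul_of_nonneg_left (log_le_sub_one_of_pos (by positivity)) hq.le
  refine h.trans_eq ?_
  field_simp
  ring

lemma log_div_le_sub {p s : ℝ} (hp1 : p ≤ 1) (hs : 0 < s) (hsp : s ≤ p) :
    log (s / p) ≤ s - p := by
  have hp := hs.trans_le hsp
  have : s / p - 1 ≤ s - p := by
    rw [div_sub_one hp.ne', div_le_iff₀ hp]
    nlinarith
  linarith [log_le_sub_one_of_pos (div_pos hs hp)]

lemma sub_le_log_div {p s : ℝ} (hp : 0 < p) (hps : p ≤ s) (hs1 : s ≤ 1) :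
    s - p ≤ log (s / p) := by
  have hs := hp.trans_le hps
  have : s - p ≤ 1 - (s / p)⁻¹ := by
    rw [inv_div, one_sub_div hs.ne', le_div_iff₀ hs]
    nlinarith
  linarith [one_sub_inv_le_log_of_pos (div_pos hs hp)]

lemma sub_add_sq_div_two_le_mul_log_div {p q : ℝ} (hp : 0 < p) (hp1 : p ≤ 1) (hq : 0 ≤ q)
    (hq1 : q ≤ 1) : q - p + (q - p) ^ 2 / 2 ≤ q * log (q / p) := by
  set g : ℝ → ℝ := fun s ↦ s * log s - s * log p - (s - p) - (s - p) ^ 2 / 2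
  have hg : Continuous g := by fun_prop
  have hg' : ∀ s, 0 < s → HasDerivAt g (log (s / p) - (s - p)) s := by
    intro s hs
    have := ((((hasDerivAt_mul_log hs.ne').sub ((hasDerivAt_id s).mul_const (log p))).sub
      ((hasDerivAt_id s).sub_const p)).sub (((hasDerivAt_id s).sub_const p).pow 2 |>.div_const 2))
    refine this.congr_deriv ?_
    rw [log_div hs.ne' hp.ne']
    simp only [id, Nat.cast_ofNat]
    ring
  have hg_nonpos : ∀ s ∈ interior (Set.Icc 0 p), log (s / p) - (s - p) ≤ 0 := by
    rw [interior_Icc]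
    exact fun s hs ↦ sub_nonpos.2 (log_div_le_sub hp1 hs.1 hs.2.le)
  have hg_nonneg : ∀ s ∈ interior (Set.Icc p 1), 0 ≤ log (s / p) - (s - p) := by
    rw [interior_Icc]
    exact fun s hs ↦ sub_nonneg.2 (sub_le_log_div hp hs.1.le hs.2.le)
  have hderiv : ∀ {a b : ℝ}, 0 ≤ a → ∀ s ∈ interior (Set.Icc a b),
      HasDerivWithinAt g (log (s / p) - (s - p)) (interior (Set.Icc a b)) s := by
    intro a b ha s hs
    rw [interior_Icc] at hs
    exact (hg' s (ha.trans_lt hs.1)).hasDerivWithinAt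
  have hgq : g p ≤ g q := by
    rcases le_total q p with hqp | hpq
    · exact antitoneOn_of_hasDerivWithinAt_nonpos (convex_Icc 0 p) hg.continuousOn
        (hderiv le_rfl) hg_nonpos ⟨hq, hqp⟩ ⟨hp.le, le_rfl⟩ hqp
    · exact monotoneOn_of_hasDerivWithinAt_nonneg (convex_Icc p 1) hg.continuousOn
        (hderiv hp.le) hg_nonneg ⟨le_rfl, hp1⟩ ⟨hpq, hq1⟩ hpq
  have hlog : q * log (q / p) = q * log q - q * log p := by
    rcases hq.eq_or_lt with rfl | hq
    · simp
    · rw [log_div hq.ne' hp.ne', mul_sub]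
  simp only [g, sub_self, zero_pow two_ne_zero, zero_div] at hgq
  linarith

lemma IsProb.le_one {X : Type*} [Fintype X] {p : X → ℝ} (hp : IsProb p) (x : X) : p x ≤ 1 :=
  hp.2 ▸ single_le_sum (fun y _ ↦ hp.1 y) (mem_univ x)

lemma IsProb.sum_sub_eq_zero {X : Type*} [Fintype X] {q p : X → ℝ} (hq : IsProb q)
    (hp : IsProb p) : ∑ x, (q x - p x) = 0 := by
  rw [sum_sub_distrib, hq.2, hp.2, sub_self]

section SqDist

variable {X : Type*} [Fintype X]

def sqDist (q p : X → ℝ) : ℝ := ∑ x, (q x - p x) ^ 2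

lemma sqDist_comm (q p : X → ℝ) : sqDist q p = sqDist p q := by
  simp only [sqDist, ← neg_sub (p _), neg_sq]

lemma sqDist_le_two_mul_add (a b c : X → ℝ) :
    sqDist a c ≤ 2 * (sqDist a b + sqDist b c) := by
  rw [sqDist, sqDist, sqDist, ← sum_add_distrib, mul_sum]
  gcongr with x
  simpa using add_sq_le (a := a x - b x) (b := b x - c x)

end SqDist

section KLBounds

variable {X : Type*} [Fintype X] {q p : X → ℝ}

lemma klDiv_le_sum_sq_div (hq : IsProb q) (hp : IsProb p) (hp0 : ∀ x, 0 < p x) :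
    klDiv q p ≤ ∑ x, (q x - p x) ^ 2 / p x :=
  calc klDiv q p ≤ ∑ x, ((q x - p x) + (q x - p x) ^ 2 / p x) :=
        sum_le_sum fun x _ ↦ mul_log_div_le_sub_add_sq_div (hp0 x) (hq.1 x)
    _ = ∑ x, (q x - p x) ^ 2 / p x := by rw [sum_add_distrib, hq.sum_sub_eq_zero hp, zero_add]

lemma klDiv_le_sqDist_div {m : ℝ} (hm : 0 < m) (hq : IsProb q) (hp : IsProb p)
    (hpm : ∀ x, m ≤ p x) : klDiv q p ≤ sqDist q p / m := by
  refine (klDiv_le_sum_sq_div hq hp fun x ↦ hm.trans_le (hpm x)).trans ?_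
  rw [sqDist, sum_div]
  gcongr with x
  exact hpm x

lemma sqDist_le_two_mul_klDiv (hq : IsProb q) (hp : IsProb p) (hp0 : ∀ x, 0 < p x) :
    sqDist q p ≤ 2 * klDiv q p := by
  have : ∑ x, ((q x - p x) + (q x - p x) ^ 2 / 2) ≤ klDiv q p :=
    sum_le_sum fun x _ ↦ sub_add_sq_div_two_le_mul_log_div (hp0 x) (hp.le_one x) (hq.1 x)
      (hq.le_one x)
  rw [sum_add_distrib, hq.sum_sub_eq_zero hp, zero_add, ← sum_div] at this
  rw [sqDist]
  linarith

end KLBounds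

theorem stmt11_general {X : Type*} [Fintype X]
    (m : ℝ) (hm : 0 < m)
    (d : ℕ) (W : Set (Fin d → ℝ))
    (pW : (Fin d → ℝ) → X → ℝ)
    (hpW : ∀ w ∈ W, IsProb (pW w) ∧ ∀ x, m ≤ pW w x) :
    ∃ C : ℝ, 0 < C ∧
      ∀ ε : ℝ, 0 < ε →
        ∀ q pstar : X → ℝ,
          IsProb q → (∀ x, m ≤ q x) →
          IsProb pstar → (∀ x, m ≤ pstar x) →
          klDiv q pstar ≤ ε →
          volume {w ∈ W | klDiv q (pW w) ≤ ε} ≤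
              volume {w ∈ W | klDiv (pW w) pstar ≤ C * ε} ∧
          volume {w ∈ W | klDiv (pW w) pstar ≤ C * ε} ≤
              volume {w ∈ W | klDiv q (pW w) ≤ (C / 2) * (C + 1) * ε} := by
  refine ⟨8 / m, by positivity, fun ε _ q pstar hq _ hps hpsm hqps ↦ ?_⟩
  have sqDist_le {a b : X → ℝ} {δ : ℝ} (ha : IsProb a) (hb : IsProb b) (hbm : ∀ x, m ≤ b x)
      (hab : klDiv a b ≤ δ) : sqDist a b ≤ 2 * δ :=
    (sqDist_le_two_mul_klDiv ha hb fun x ↦ hm.trans_le (hbm x)).trans (by linarith)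
  have hq_ps := sqDist_le hq hps hpsm hqps
  refine ⟨measure_mono ?_, measure_mono ?_⟩
  · rintro w ⟨hw, hqw⟩
    obtain ⟨hwP, hwm⟩ := hpW w hw
    have hw_q := sqDist_comm q (pW w) ▸ sqDist_le hq hwP hwm hqw
    refine ⟨hw, (klDiv_le_sqDist_div hm hwP hps hpsm).trans ?_⟩
    calc sqDist (pW w) pstar / m ≤ 2 * (2 * ε + 2 * ε) / m := by
          gcongr; exact (sqDist_le_two_mul_add _ q _).trans (by gcongr)
      _ = 8 / m * ε := by ring
  · rintro w ⟨hw, hwps⟩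
    obtain ⟨hwP, hwm⟩ := hpW w hw
    have hps_w := sqDist_comm (pW w) pstar ▸ sqDist_le hwP hps hpsm hwps
    refine ⟨hw, (klDiv_le_sqDist_div hm hq hwP hwm).trans ?_⟩
    calc sqDist q (pW w) / m ≤ 2 * (2 * ε + 2 * (8 / m * ε)) / m := by
          gcongr; exact (sqDist_le_two_mul_add _ pstar _).trans (by gcongr)
      _ = 8 / m / 2 * (8 / m + 1) * ε := by field_simp; ring

/-- for a parameterized family `w ↦ p_w` defined on a measurable
`W ⊆ ℝ^d` with values in the restricted simplex `Δ̊_m(X)` and measurable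
sublevel sets, there is `C > 0` such that whenever `D(q‖p*) ≤ ε`, the Lebesgue
volumes of the sublevel sets satisfy
`Vol{w ∈ W : D(q‖p_w) ≤ ε} ≤ Vol{w ∈ W : D(p_w‖p*) ≤ Cε}
  ≤ Vol{w ∈ W : D(q‖p_w) ≤ (C/2)(C+1)ε}`. -/
theorem stmt11 {X : Type*} [Fintype X] (hX : 2 ≤ Fintype.card X)
    (m : ℝ) (hm : 0 < m) (hm' : m ≤ 1 / (Fintype.card X : ℝ))
    (d : ℕ) (W : Set (Fin d → ℝ)) (hW : MeasurableSet W)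
    (pW : (Fin d → ℝ) → X → ℝ)
    (hpW : ∀ w ∈ W, IsProb (pW w) ∧ ∀ x, m ≤ pW w x)
    (hmeas : ∀ (q' p' : X → ℝ) (ε : ℝ),
      MeasurableSet {w ∈ W | klDiv q' (pW w) ≤ ε} ∧
      MeasurableSet {w ∈ W | klDiv (pW w) p' ≤ ε}) :
    ∃ C : ℝ, 0 < C ∧
      ∀ ε : ℝ, 0 < ε →
        ∀ q pstar : X → ℝ,
          IsProb q → (∀ x, m ≤ q x) →
          IsProb pstar → (∀ x, m ≤ pstar x) →
          klDiv q pstar ≤ ε →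
          volume {w ∈ W | klDiv q (pW w) ≤ ε} ≤
              volume {w ∈ W | klDiv (pW w) pstar ≤ C * ε} ∧
          volume {w ∈ W | klDiv (pW w) pstar ≤ C * ε} ≤
              volume {w ∈ W | klDiv q (pW w) ≤ (C / 2) * (C + 1) * ε} :=
  stmt11_general m hm d W pW hpW
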